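/- Let Ψ₁ be a d₁×d₁ symmetric positive definite matrix that is block-diagonal with respect to a partition π of {1,…,d₁}, and let Ψ₂ be any d₂×d₂ symmetric positive definite matrix. Then the d₁×d₁ matrix tr_{d₁}[(Ψ₁ ⊕ Ψ₂)^{-1}] is also block-diagonal with respect to π. -/

import Mathlib

/-!
A matrix that vanishes between indices in different parts of a partition is block triangular
for any linear order on the parts and also for the reversed order, so its inverse is block
triangular for both, i.e. block diagonal again. `Ψ₁ ⊕ Ψ₂` is such a matrix for the partition of
`Fin d₁ × Fin d₂` by the part of the first coordinate, and `(tr_{d₁} M)_{ij} = ∑ₐ M_{(j,a),(i,a)}`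
only reads entries of `M` between first coordinates `j` and `i`.
-/

open Matrix
open scoped Kronecker

/-- The blockwise trace `tr_b : M_{mb}(ℝ) → M_b(ℝ)`, `(tr_b M)_{ij} = tr(M (J^{ij} ⊗ I_m))`. -/
def blockTrace {b m : ℕ} (M : Matrix (Fin b × Fin m) (Fin b × Fin m) ℝ) :
    Matrix (Fin b) (Fin b) ℝ :=
  fun i j => (M * (single i j (1 : ℝ) ⊗ₖ (1 : Matrix (Fin m) (Fin m) ℝ))).trace

namespace Matrix

variable {n R γ : Type*} [DecidableEq n]

theorem inv_apply_eq_zero_of_apply_eq_zero [Fintype n] [CommRing R] (f : n → γ)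
    {M : Matrix n n R} (hM : ∀ i j, f i ≠ f j → M i j = 0) (i j : n) (hij : f i ≠ f j) :
    M⁻¹ i j = 0 := by
  by_cases hdet : IsUnit M.det
  swap
  · rw [nonsing_inv_apply_not_isUnit M hdet, zero_apply]
  have : Invertible M := invertibleOfIsUnitDet M hdet
  let : LinearOrder γ := IsWellOrder.linearOrder WellOrderingRel
  rcases hij.lt_or_gt with hlt | hgt
  · exact blockTriangular_inv_of_blockTriangular (b := OrderDual.toDual ∘ f)
      (fun i j h => hM i j h.ne') hlt
  · exact blockTriangular_inv_of_blockTriangular (fun i j h => hM i j h.ne') hgt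

theorem kroneckerSum_apply_eq_zero {d : Type*} [DecidableEq d] [Semiring R] (f : n → γ)
    {A : Matrix n n R} (B : Matrix d d R) (hA : ∀ i j, f i ≠ f j → A i j = 0)
    (x y : n × d) (hxy : f x.1 ≠ f y.1) :
    (A ⊗ₖ (1 : Matrix d d R) + (1 : Matrix n n R) ⊗ₖ B) x y = 0 := by
  have hne : x.1 ≠ y.1 := fun h => hxy (congrArg f h)
  simp [hA _ _ hxy, one_apply_ne hne]

end Matrix

theorem blockTrace_apply {b m : ℕ} (M : Matrix (Fin b × Fin m) (Fin b × Fin m) ℝ)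
    (i j : Fin b) : blockTrace M i j = ∑ a, M (j, a) (i, a) := by
  simp [blockTrace, trace, mul_apply, single_apply, one_apply, Fintype.sum_prod_type, ite_and]

theorem blockTrace_inv_kroneckerSum_blockDiag_general (d₁ d₂ : ℕ) {γ : Type*} (g : Fin d₁ → γ)
    (Ψ₁ : Matrix (Fin d₁) (Fin d₁) ℝ) (Ψ₂ : Matrix (Fin d₂) (Fin d₂) ℝ)
    (hblock : ∀ i j : Fin d₁, g i ≠ g j → Ψ₁ i j = 0) :
    ∀ i j : Fin d₁, g i ≠ g j →
      blockTrace ((Ψ₁ ⊗ₖ (1 : Matrix (Fin d₂) (Fin d₂) ℝ)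
        + (1 : Matrix (Fin d₁) (Fin d₁) ℝ) ⊗ₖ Ψ₂)⁻¹) i j = 0 := by
  intro i j hij
  rw [blockTrace_apply]
  exact Finset.sum_eq_zero fun a _ => inv_apply_eq_zero_of_apply_eq_zero (g ∘ Prod.fst)
    (kroneckerSum_apply_eq_zero g Ψ₂ hblock) _ _ hij.symm

/-- If `Ψ₁` is symmetric positive definite and block-diagonal with respect to a
partition of `{1,…,d₁}` and `Ψ₂` is symmetric positive definite, then
`tr_{d₁}[(Ψ₁ ⊕ Ψ₂)⁻¹]` is block-diagonal with respect to the same partition. -/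
theorem blockTrace_inv_kroneckerSum_blockDiag (d₁ d₂ : ℕ) {γ : Type*} (g : Fin d₁ → γ)
    (Ψ₁ : Matrix (Fin d₁) (Fin d₁) ℝ) (Ψ₂ : Matrix (Fin d₂) (Fin d₂) ℝ)
    (hΨ₁ : Ψ₁.PosDef) (hΨ₂ : Ψ₂.PosDef)
    (hblock : ∀ i j : Fin d₁, g i ≠ g j → Ψ₁ i j = 0) :
    ∀ i j : Fin d₁, g i ≠ g j →
      blockTrace ((Ψ₁ ⊗ₖ (1 : Matrix (Fin d₂) (Fin d₂) ℝ)
        + (1 : Matrix (Fin d₁) (Fin d₁) ℝ) ⊗ₖ Ψ₂)⁻¹) i j = 0 :=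
  blockTrace_inv_kroneckerSum_blockDiag_general d₁ d₂ g Ψ₁ Ψ₂ hblock
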